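/- arXiv:2004.12576 — 4 statements merged into one kernel-verified Lean document; each statement's English description precedes it below -/
import Mathlib

section
/- Let 0 < ν < 1 and 0 < p < 1. For every real k ≥ 1, the derivative condition shows that the function f(k) = (1 - (p(1-ν))^k) / (1 - (1-ν)^k) is decreasing in k; in particular, for all integers k ≥ 1, f(k) ≤ f(1) = (1 - p(1-ν))/ν. -/
open Real Set

lemma psi_strictMonoOn : StrictMonoOn (fun s : ℝ => -(s * Real.log s) / (1 - s)) (Set.Ioo 0 1) := by
  apply strictMonoOn_of_deriv_pos (convex_Ioo 0 1)
  · apply ContinuousOn.div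
    · exact (continuousOn_id.mul (Real.continuousOn_log.mono (by
        intro s hs
        exact ne_of_gt hs.1))).neg
    · exact (continuousOn_const.sub continuousOn_id)
    · intro s hs
      have : s < 1 := hs.2
      intro h
      nlinarith [h]
  · intro s hs
    rw [interior_Ioo] at hs
    have hs0 : (0:ℝ) < s := hs.1
    have hs1 : s < 1 := hs.2
    have hden : 1 - s ≠ 0 := by linarith
    have hnum : HasDerivAt (fun s : ℝ => -(s * Real.log s)) (-(Real.log s + 1)) s := by
      have := (hasDerivAt_id s).mul (Real.hasDerivAt_log hs0.ne')
      refine this.neg.congr_deriv ?_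
      simp only [id, one_mul, mul_inv_cancel₀ hs0.ne']
    have hd : HasDerivAt (fun s : ℝ => 1 - s) (-1) s := by
      simpa using (hasDerivAt_id s).const_sub (1:ℝ)
    have hq := hnum.div hd hden
    rw [show (fun s : ℝ => -(s * Real.log s) / (1 - s)) = ((fun s : ℝ => -(s * Real.log s)) / fun s : ℝ => 1 - s) from rfl, hq.deriv]
    have key : Real.log s < s - 1 := Real.log_lt_sub_one_of_pos hs0 hs1.ne
    have h2 : (0:ℝ) < (1 - s) ^ 2 := by positivity
    have : (-(Real.log s + 1) * (1 - s) - -(s * Real.log s) * -1) = s - 1 - Real.log s := by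
      ring
    rw [this]
    apply div_pos (by linarith) h2

lemma psi_ineq {u v : ℝ} (hu : 0 < u) (huv : u < v) (hv : v < 1) :
    u * (-Real.log u) * (1 - v) < v * (-Real.log v) * (1 - u) := by
  have h := psi_strictMonoOn ⟨hu, huv.trans hv⟩ ⟨hu.trans huv, hv⟩ huv
  have h1u : (0:ℝ) < 1 - u := by linarith
  have h1v : (0:ℝ) < 1 - v := by linarith
  rw [div_lt_div_iff₀ h1u h1v] at h
  nlinarith [h]

theorem ratio_decreasing_and_max_at_one
    (ν p : ℝ) (hν : 0 < ν) (hν1 : ν < 1) (hp : 0 < p) (hp1 : p < 1) :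
    StrictAntiOn (fun k : ℝ => (1 - (p * (1 - ν)) ^ k) / (1 - (1 - ν) ^ k))
      {k : ℝ | 1 ≤ k} ∧
    ∀ k : ℕ, 1 ≤ k →
      (1 - (p * (1 - ν)) ^ (k : ℕ)) / (1 - (1 - ν) ^ (k : ℕ)) ≤ (1 - p * (1 - ν)) / ν := by
  set a := p * (1 - ν) with ha_def
  set b := 1 - ν with hb_def
  have hb0 : 0 < b := by simp [hb_def]; linarith
  have hb1 : b < 1 := by simp [hb_def]; linarith
  have ha0 : 0 < a := mul_pos hp hb0
  have hab : a < b := by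
    calc a = p * b := rfl
    _ < 1 * b := by exact mul_lt_mul_of_pos_right hp1 hb0
    _ = b := one_mul b
  have ha1 : a < 1 := hab.trans hb1
  have hset : {k : ℝ | 1 ≤ k} = Set.Ici (1:ℝ) := rfl
  have hbk_lt : ∀ k : ℝ, 0 < k → b ^ k < 1 := fun k hk =>
    Real.rpow_lt_one hb0.le hb1 hk
  have hanti : StrictAntiOn (fun k : ℝ => (1 - a ^ k) / (1 - b ^ k)) {k : ℝ | 1 ≤ k} := by
    rw [hset]
    apply strictAntiOn_of_deriv_neg (convex_Ici 1)
    · apply ContinuousOn.div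
      · apply Continuous.continuousOn
        have : Continuous fun k : ℝ => a ^ k := by
          have : (fun k : ℝ => a ^ k) = fun k : ℝ => Real.exp (Real.log a * k) := by
            funext k
            rw [Real.rpow_def_of_pos ha0]
          rw [this]
          exact Real.continuous_exp.comp (continuous_const.mul continuous_id)
        exact continuous_const.sub this
      · apply Continuous.continuousOn
        have : Continuous fun k : ℝ => b ^ k := by
          have : (fun k : ℝ => b ^ k) = fun k : ℝ => Real.exp (Real.log b * k) := by
            funext k
            rw [Real.rpow_def_of_pos hb0]
          rw [this]
          exact Real.continuous_exp.comp (continuous_const.mul continuous_id)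
        exact continuous_const.sub this
      · intro k hk
        have : b ^ k < 1 := hbk_lt k (lt_of_lt_of_le zero_lt_one hk)
        intro h
        linarith [h]
    · intro k hk
      rw [interior_Ici] at hk
      have hk0 : (0:ℝ) < k := lt_trans zero_lt_one hk
      have hbk1 : b ^ k < 1 := hbk_lt k hk0
      have hden : 1 - b ^ k ≠ 0 := by linarith
      have hfa : HasDerivAt (fun k : ℝ => 1 - a ^ k) (-(a ^ k * Real.log a)) k := by
        simpa using
          (Real.hasStrictDerivAt_const_rpow ha0 k).hasDerivAt.const_sub (1:ℝ)
      have hfb : HasDerivAt (fun k : ℝ => 1 - b ^ k) (-(b ^ k * Real.log b)) k := by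
        simpa using
          (Real.hasStrictDerivAt_const_rpow hb0 k).hasDerivAt.const_sub (1:ℝ)
      have hq := hfa.div hfb hden
      rw [show (fun k : ℝ => (1 - a ^ k) / (1 - b ^ k)) = ((fun k : ℝ => 1 - a ^ k) / fun k : ℝ => 1 - b ^ k) from rfl, hq.deriv]
      set u := a ^ k with hu_def
      set v := b ^ k with hv_def
      have hu0 : 0 < u := Real.rpow_pos_of_pos ha0 k
      have hv0 : 0 < v := Real.rpow_pos_of_pos hb0 k
      have huv : u < v := Real.rpow_lt_rpow ha0.le hab hk0
      have hv1 : v < 1 := hbk1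
      have hlogu : Real.log u = k * Real.log a := Real.log_rpow ha0 k
      have hlogv : Real.log v = k * Real.log b := Real.log_rpow hb0 k
      have hkey : u * (-Real.log u) * (1 - v) < v * (-Real.log v) * (1 - u) :=
        psi_ineq hu0 huv hv1
      rw [hlogu, hlogv] at hkey
      have hnum : -(u * Real.log a) * (1 - v) - (1 - u) * -(v * Real.log b) < 0 := by
        nlinarith [hkey, hk0]
      have hden2 : (0:ℝ) < (1 - v) ^ 2 := by positivity
      exact div_neg_of_neg_of_pos hnum hden2
  constructor
  · exact hanti
  · intro k hk
    have hmem1 : (1:ℝ) ∈ {k : ℝ | 1 ≤ k} := by simp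
    have hmemk : (k:ℝ) ∈ {k : ℝ | 1 ≤ k} := by
      simp only [mem_setOf_eq]
      exact_mod_cast hk
    have h := hanti.antitoneOn hmem1 hmemk (by exact_mod_cast hk)
    rw [Real.rpow_one, Real.rpow_one] at h
    have h1b : 1 - b = ν := by simp [hb_def]
    rw [h1b] at h
    calc (1 - a ^ (k:ℕ)) / (1 - b ^ (k:ℕ))
        = (1 - a ^ ((k:ℕ):ℝ)) / (1 - b ^ ((k:ℕ):ℝ)) := by
          rw [Real.rpow_natCast, Real.rpow_natCast]
    _ ≤ (1 - a) / ν := h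
end

section
/- Let 0 < ν < 1, 0 < p < 1. For all real k > 0, -p^k·log(p(1-ν)) + p^k·(1-ν)^k·log p + log(1-ν) < 0. -/
open Real

theorem key_derivative_inequality
    (ν p : ℝ) (hν : 0 < ν) (hν1 : ν < 1) (hp : 0 < p) (hp1 : p < 1) :
    ∀ k : ℝ, 0 < k →
      -(p ^ k) * Real.log (p * (1 - ν)) + p ^ k * (1 - ν) ^ k * Real.log p
        + Real.log (1 - ν) < 0 := by
  intro k hk
  have hq : (0:ℝ) < 1 - ν := by linarith
  have ht0 : 0 < p ^ k := Real.rpow_pos_of_pos hp k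
  have hs0 : 0 < (1 - ν) ^ k := Real.rpow_pos_of_pos hq k
  have ht1 : p ^ k < 1 := Real.rpow_lt_one hp.le hp1 hk
  have hs1 : (1 - ν) ^ k < 1 := Real.rpow_lt_one hq.le (by linarith) hk
  set t := p ^ k with htdef
  set s := (1 - ν) ^ k with hsdef
  have hlt : Real.log t = k * Real.log p := Real.log_rpow hp k
  have hls : Real.log s = k * Real.log (1 - ν) := Real.log_rpow hq k
  have hlm : Real.log (p * (1 - ν)) = Real.log p + Real.log (1 - ν) :=
    Real.log_mul (ne_of_gt hp) (ne_of_gt hq)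
  -- key inequality A : t * (-log t) < 1 - t
  have hA : t * (-Real.log t) < 1 - t := by
    have h1 : Real.log (1 / t) < 1 / t - 1 :=
      Real.log_lt_sub_one_of_pos (by positivity) (by
        intro h
        have : t = 1 := by field_simp at h; linarith
        linarith)
    rw [Real.log_div one_ne_zero (ne_of_gt ht0), Real.log_one] at h1
    have := mul_lt_mul_of_pos_left h1 ht0
    calc t * (-Real.log t) = t * (0 - Real.log t) := by ring
    _ < t * (1 / t - 1) := this
    _ = 1 - t := by field_simp
  -- key inequality B : 1 - s < -log s
  have hB : 1 - s < -Real.log s := by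
    have h1 : Real.log s < s - 1 :=
      Real.log_lt_sub_one_of_pos hs0 (ne_of_lt hs1)
    linarith
  -- combine
  have hchain : t * (1 - s) * (-Real.log t) < (1 - t) * (-Real.log s) := by
    calc t * (1 - s) * (-Real.log t) = (1 - s) * (t * (-Real.log t)) := by ring
    _ < (1 - s) * (1 - t) := by
        exact mul_lt_mul_of_pos_left hA (by linarith)
    _ = (1 - t) * (1 - s) := by ring
    _ < (1 - t) * (-Real.log s) := mul_lt_mul_of_pos_left hB (by linarith)
  -- translate to the goal
  have hkey : t * (s - 1) * Real.log t + (1 - t) * Real.log s < 0 := by nlinarith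
  have hgoal : k * (-t * Real.log (p * (1 - ν)) + t * s * Real.log p + Real.log (1 - ν))
      = t * (s - 1) * Real.log t + (1 - t) * Real.log s := by
    rw [hlm, hlt, hls]; ring
  nlinarith [mul_pos hk (neg_pos.mpr (show -t * Real.log (p * (1 - ν)) + t * s * Real.log p + Real.log (1 - ν) < 0 from by nlinarith))]
end

section
/- Let R₀ > 1 and set ε = 1/R₀. The equation log x = R₀(x - 1) has exactly one solution x = π₀ in the open interval (0, 1), and this solution satisfies 0 < π₀ < ε. Consequently π₁ := 1 - π₀ > 1 - ε. -/
open Real Set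

theorem extinction_prob_unique_and_lt_eps
    (R₀ : ℝ) (hR : 1 < R₀) (ε : ℝ) (hε : ε = 1 / R₀) :
    (∃! x : ℝ, x ∈ Set.Ioo (0 : ℝ) 1 ∧ Real.log x = R₀ * (x - 1)) ∧
    ∀ x : ℝ, x ∈ Set.Ioo (0 : ℝ) 1 → Real.log x = R₀ * (x - 1) →
      x < ε ∧ 1 - x > 1 - ε := by
  have hR0 : (0:ℝ) < R₀ := by linarith
  -- Part 2: any root in (0,1) is < ε = 1/R₀
  have key : ∀ x : ℝ, x ∈ Set.Ioo (0:ℝ) 1 → Real.log x = R₀ * (x - 1) → x < ε := by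
    rintro x ⟨hx0, hx1⟩ hlog
    have hxne : x⁻¹ ≠ 1 := by
      intro h
      have : x = 1 := by
        field_simp at h; linarith
      linarith
    have h := Real.log_lt_sub_one_of_pos (inv_pos.mpr hx0) hxne
    rw [Real.log_inv, hlog] at h
    have hinv : x * x⁻¹ = 1 := mul_inv_cancel₀ hx0.ne'
    rw [hε]
    rw [lt_div_iff₀ hR0]
    nlinarith [hinv, hx0, hx1]
  -- Uniqueness: at most one root in (0,1), via strict concavity of log
  have uniq : ∀ x y : ℝ, x ∈ Set.Ioo (0:ℝ) 1 → Real.log x = R₀ * (x - 1) →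
      y ∈ Set.Ioo (0:ℝ) 1 → Real.log y = R₀ * (y - 1) → x = y := by
    have main : ∀ x y : ℝ, x ∈ Set.Ioo (0:ℝ) 1 → Real.log x = R₀ * (x - 1) →
        y ∈ Set.Ioo (0:ℝ) 1 → Real.log y = R₀ * (y - 1) → x < y → False := by
      rintro x y ⟨hx0, hx1⟩ hlx ⟨hy0, hy1⟩ hly hxy
      set a : ℝ := (1 - y) / (1 - x) with ha
      set b : ℝ := (y - x) / (1 - x) with hb
      have h1x : (0:ℝ) < 1 - x := by linarith
      have hapos : 0 < a := div_pos (by linarith) h1x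
      have hbpos : 0 < b := div_pos (by linarith) h1x
      have hab : a + b = 1 := by rw [ha, hb]; field_simp; ring
      have hcomb : a • x + b • (1:ℝ) = y := by
        simp only [smul_eq_mul, mul_one]
        rw [ha, hb]
        field_simp
        ring
      have hconc := strictConcaveOn_log_Ioi.2 (Set.mem_Ioi.mpr hx0)
        (Set.mem_Ioi.mpr one_pos) (by linarith : x ≠ 1) hapos hbpos hab
      rw [hcomb, Real.log_one, smul_eq_mul, smul_eq_mul, mul_zero, add_zero] at hconc
      -- hconc : a * log x < log y
      have haeq : a * (x - 1) = y - 1 := by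
        rw [ha]
        field_simp
        ring
      rw [hlx, hly] at hconc
      nlinarith [hconc, haeq]
    intro x y hx hlx hy hly
    rcases lt_trichotomy x y with h | h | h
    · exact absurd (main x y hx hlx hy hly h) (fun hf => hf)
    · exact h
    · exact absurd (main y x hy hly hx hlx h) (fun hf => hf)
  -- Existence via IVT
  have hexist : ∃ x : ℝ, x ∈ Set.Ioo (0:ℝ) 1 ∧ Real.log x = R₀ * (x - 1) := by
    set g : ℝ → ℝ := fun x => Real.log x - R₀ * (x - 1) with hg
    set c : ℝ := Real.exp (-(2*R₀)) with hc
    have hcpos : 0 < c := Real.exp_pos _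
    have hd0 : (0:ℝ) < 1/R₀ := by positivity
    have hcd : c < 1/R₀ := by
      have h1 : 2*R₀ + 1 ≤ Real.exp (2*R₀) := Real.add_one_le_exp _
      have h2 : R₀ < Real.exp (2*R₀) := by linarith
      rw [hc, Real.exp_neg]
      rw [one_div]
      exact inv_strictAnti₀ hR0 h2
    have hd1 : (1:ℝ)/R₀ < 1 := by
      rw [div_lt_one hR0]; exact hR
    have hgc : g c < 0 := by
      have : Real.log c = -(2*R₀) := Real.log_exp _
      simp only [hg, this]
      nlinarith [hcpos]
    have hgd : 0 < g (1/R₀) := by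
      have hlogR : Real.log R₀ < R₀ - 1 := Real.log_lt_sub_one_of_pos hR0 (ne_of_gt hR)
      have : Real.log (1/R₀) = -Real.log R₀ := by
        rw [one_div, Real.log_inv]
      simp only [hg, this]
      have : R₀ * (1/R₀ - 1) = 1 - R₀ := by field_simp
      rw [this]
      linarith
    have hcont : ContinuousOn g (Set.Icc c (1/R₀)) := by
      apply ContinuousOn.sub
      · apply Real.continuousOn_log.mono
        intro x hx
        simp only [Set.mem_compl_iff, Set.mem_singleton_iff]
        have := hx.1
        intro h; rw [h] at this; linarith
      · exact (continuous_const.mul (continuous_id.sub continuous_const)).continuousOn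
    have h0mem : (0:ℝ) ∈ Set.Ioo (g c) (g (1/R₀)) := ⟨hgc, hgd⟩
    have := intermediate_value_Ioo (le_of_lt hcd) hcont h0mem
    obtain ⟨ξ, hξmem, hξeq⟩ := this
    refine ⟨ξ, ⟨lt_trans hcpos hξmem.1, lt_trans hξmem.2 hd1⟩, ?_⟩
    have : Real.log ξ - R₀ * (ξ - 1) = 0 := hξeq
    linarith
  obtain ⟨x₀, hx₀mem, hx₀eq⟩ := hexist
  refine ⟨⟨x₀, ⟨hx₀mem, hx₀eq⟩, ?_⟩, ?_⟩
  · rintro y ⟨hymem, hyeq⟩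
    exact uniq y x₀ hymem hyeq hx₀mem hx₀eq
  · intro x hx hlog
    have := key x hx hlog
    exact ⟨this, by linarith⟩
end

section
/- Let 0 < ν < 1, 0 < ε < 1, π₀ ∈ (0,1), π₁ = 1 - π₀, and suppose π₁ > 1 - ε. Then the lower bound p̲ (the smaller root of π₀(1-ν)p² - (π₀ + π₁ν + (1-ε)(1-ν))p + (1-ε) = 0) satisfies p̲ ≤ p̄ := 1/(1 + (ε/(1-ε))ν). -/
theorem lower_bound_le_upper_bound
    (ν ε π₀ π₁ : ℝ) (hν : 0 < ν) (hν1 : ν < 1) (hε : 0 < ε) (hε1 : ε < 1)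
    (hπ : π₀ ∈ Set.Ioo (0 : ℝ) 1) (hπ1 : π₁ = 1 - π₀) (hπ1big : π₁ > 1 - ε) :
    ∀ pl : ℝ,
      π₀ * (1 - ν) * pl ^ 2 - (π₀ + π₁ * ν + (1 - ε) * (1 - ν)) * pl + (1 - ε) = 0 →
      pl < 1 →
      pl ≤ 1 / (1 + (ε / (1 - ε)) * ν) := by
  obtain ⟨hπ0, hπ01⟩ := hπ
  intro pl hroot hlt
  subst hπ1
  have hπε : π₀ < ε := by linarith
  have h1e : (0:ℝ) < 1 - ε := by linarith
  have hD : (0:ℝ) < 1 - ε + ε * ν := by nlinarith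
  have hbar : 1 / (1 + (ε / (1 - ε)) * ν) = (1 - ε) / (1 - ε + ε * ν) := by
    rw [one_div, eq_div_iff (ne_of_gt hD)]
    field_simp
  rw [hbar, le_div_iff₀ hD]
  by_contra h
  push_neg at h
  have h1 : 0 < pl * (1 - ε + ε * ν) - (1 - ε) := by linarith
  have h2 : 0 < 1 - pl := by linarith
  have ha : (0:ℝ) < π₀ * (1 - ν) := mul_pos hπ0 (by linarith)
  nlinarith [mul_pos (mul_pos ha h2) h1, mul_pos hD h1,
    mul_pos (mul_pos ha h1e) h2]
end
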